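/- arXiv:2302.13479 — 2 statements merged into one kernel-verified Lean document; each statement's English description precedes it below -/
import Mathlib

section
/- The function F first decreases and then increases over the positive integers: for every integer k with 1 ≤ k < ⌈σ⌉ one has F(k+1) < F(k), and for every integer k ≥ max{1, ⌈σ⌉} one has F(k+1) ≥ F(k). In particular F attains its minimum over the positive integers at k = max{1, ⌈σ⌉}. -/
/-!
Write `a = 1 - B`. Clearing denominators, `F (x + 1) - F x` equals the quadratic
`q x = a/2 x² + (1 + B)/2 x - E` times a factor that is positive for `x ≥ 1`. The roots of `q`
are `-(1 + B)/(2a) ± s`, with `s` the square root in `σ`; since `E > 0`, the smaller root is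
negative and `σ` is the larger one, so for `x ≥ 1` the increment `F (x + 1) - F x` has the sign
of `x - σ`. Hence `F` decreases strictly up to `⌈σ⌉` and increases weakly from there on.
-/

open Set

theorem Int.isMinOn_Ici_of_succ_le_of_le_succ {β : Type*} [Preorder β] {f : ℤ → β} {a m : ℤ}
    (hdesc : ∀ j, a ≤ j → j < m → f (j + 1) ≤ f j) (hasc : ∀ j, m ≤ j → f j ≤ f (j + 1)) :
    IsMinOn f (Ici a) m := by
  refine isMinOn_iff.mpr fun k hk => ?_
  rcases le_total m k with hmk | hkm
  · exact monotoneOn_of_le_succ ordConnected_Ici (fun j _ hj _ => hasc j hj) self_mem_Ici hmk hmk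
  · refine antitoneOn_of_succ_le ordConnected_Icc (fun j _ hj hj1 => hdesc j hj.1 ?_)
      ⟨hk, hkm⟩ ⟨hk.trans hkm, le_rfl⟩ hkm
    exact Int.lt_iff_add_one_le.mpr hj1.2

noncomputable def avgCost (B E x : ℝ) : ℝ :=
  (1 - B) / (B + x * (1 - B)) * (x * (x - 1) / 2 + (E + x) / (1 - B) + B / (1 - B) ^ 2)

noncomputable def avgCostDisc (B E : ℝ) : ℝ :=
  Real.sqrt (B ^ 2 / (1 - B) ^ 2 + (B + 2 * E) / (1 - B) + 1 / 4)

noncomputable def avgCostRoot (B E : ℝ) : ℝ := -(1 + B) / (2 * (1 - B)) + avgCostDisc B E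

section AvgCost

variable {B E x : ℝ}

lemma avgCost_denom_pos (hB : B < 1) (hx : 1 ≤ x) : 0 < B + x * (1 - B) := by
  nlinarith

lemma avgCost_succ_sub (hB : B < 1) (hx : 1 ≤ x) :
    avgCost B E (x + 1) - avgCost B E x =
      ((1 - B) / 2 * x ^ 2 + (1 + B) / 2 * x - E) *
        ((1 - B) / ((B + x * (1 - B)) * (B + (x + 1) * (1 - B)))) := by
  have h₀ := (avgCost_denom_pos hB hx).ne'
  have h₁ := (avgCost_denom_pos (x := x + 1) hB (by linarith)).ne'
  have ha : 1 - B ≠ 0 := by linarith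
  rw [avgCost, avgCost, div_mul_eq_mul_div, div_mul_eq_mul_div, div_sub_div _ _ h₁ h₀]
  field_simp
  ring

lemma avgCostDisc_sq (hB : B < 1) (hE : 0 ≤ E) :
    avgCostDisc B E ^ 2 = ((1 + B) / (2 * (1 - B))) ^ 2 + 2 * E / (1 - B) := by
  have ha : 0 < 1 - B := by linarith
  have hrad : B ^ 2 / (1 - B) ^ 2 + (B + 2 * E) / (1 - B) + 1 / 4 =
      ((1 + B) / (2 * (1 - B))) ^ 2 + 2 * E / (1 - B) := by
    field_simp
    ring
  rw [avgCostDisc, hrad, Real.sq_sqrt (by positivity)]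

lemma quadratic_eq_mul_sub_avgCostRoot (hB : B < 1) (hE : 0 ≤ E) :
    (1 - B) / 2 * x ^ 2 + (1 + B) / 2 * x - E =
      (1 - B) / 2 * (x - avgCostRoot B E) * (x + (1 + B) / (2 * (1 - B)) + avgCostDisc B E) := by
  have ha : 1 - B ≠ 0 := by linarith
  have hfactor : (x - avgCostRoot B E) * (x + (1 + B) / (2 * (1 - B)) + avgCostDisc B E) =
      (x + (1 + B) / (2 * (1 - B))) ^ 2 - avgCostDisc B E ^ 2 := by
    rw [avgCostRoot]
    ring
  rw [mul_assoc, hfactor, avgCostDisc_sq hB hE]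
  field_simp
  ring

lemma neg_lt_avgCostDisc (hB : B < 1) (hE : 0 < E) :
    -((1 + B) / (2 * (1 - B))) < avgCostDisc B E := by
  have hsq := avgCostDisc_sq hB hE.le
  have hpos : 0 < 2 * E / (1 - B) := div_pos (by linarith) (by linarith)
  have hnonneg : 0 ≤ avgCostDisc B E := Real.sqrt_nonneg _
  nlinarith

lemma exists_avgCost_succ_sub_eq_mul (hB : B < 1) (hE : 0 < E) (hx : 1 ≤ x) :
    ∃ p > 0, avgCost B E (x + 1) - avgCost B E x = (x - avgCostRoot B E) * p := by
  have ha : 0 < 1 - B := by linarith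
  have h₀ := avgCost_denom_pos hB hx
  have h₁ := avgCost_denom_pos (x := x + 1) hB (by linarith)
  have hroot : 0 < x + (1 + B) / (2 * (1 - B)) + avgCostDisc B E := by
    linarith [neg_lt_avgCostDisc hB hE]
  refine ⟨(1 - B) / 2 * (x + (1 + B) / (2 * (1 - B)) + avgCostDisc B E) *
      ((1 - B) / ((B + x * (1 - B)) * (B + (x + 1) * (1 - B)))), by positivity, ?_⟩
  rw [avgCost_succ_sub hB hx, quadratic_eq_mul_sub_avgCostRoot hB hE.le]
  ring

lemma avgCost_succ_lt (hB : B < 1) (hE : 0 < E) (hx : 1 ≤ x) (hxσ : x < avgCostRoot B E) :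
    avgCost B E (x + 1) < avgCost B E x := by
  obtain ⟨p, hp, hdiff⟩ := exists_avgCost_succ_sub_eq_mul hB hE hx
  have := mul_neg_of_neg_of_pos (sub_neg.mpr hxσ) hp
  linarith

lemma avgCost_le_succ (hB : B < 1) (hE : 0 < E) (hx : 1 ≤ x) (hσx : avgCostRoot B E ≤ x) :
    avgCost B E x ≤ avgCost B E (x + 1) := by
  obtain ⟨p, hp, hdiff⟩ := exists_avgCost_succ_sub_eq_mul hB hE hx
  have := mul_nonneg (sub_nonneg.mpr hσx) hp.le
  linarith

end AvgCost

theorem F_unimodal_general (B E : ℝ) (hB1 : B < 1) (hE : 0 < E)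
    (F : ℤ → ℝ)
    (hF : ∀ k : ℤ, 1 ≤ k →
      F k = ((1 - B) / (B + k * (1 - B))) *
        ((k : ℝ) * (k - 1) / 2 + (E + k) / (1 - B) + B / (1 - B) ^ 2))
    (σ : ℝ)
    (hσ : σ = -(1 + B) / (2 * (1 - B)) +
      Real.sqrt (B ^ 2 / (1 - B) ^ 2 + (B + 2 * E) / (1 - B) + 1 / 4)) :
    (∀ k : ℤ, 1 ≤ k → k < ⌈σ⌉ → F (k + 1) < F k) ∧
    (∀ k : ℤ, max 1 ⌈σ⌉ ≤ k → F k ≤ F (k + 1)) ∧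
    (∀ k : ℤ, 1 ≤ k → F (max 1 ⌈σ⌉) ≤ F k) := by
  replace hσ : σ = avgCostRoot B E := hσ
  have hF' : ∀ k : ℤ, 1 ≤ k → F k = avgCost B E k := hF
  have hdesc : ∀ k : ℤ, 1 ≤ k → k < ⌈σ⌉ → F (k + 1) < F k := fun k hk hkσ => by
    rw [hF' k hk, hF' (k + 1) (by omega), Int.cast_add, Int.cast_one]
    exact avgCost_succ_lt hB1 hE (by exact_mod_cast hk) (hσ ▸ Int.lt_ceil.mp hkσ)
  have hasc : ∀ k : ℤ, max 1 ⌈σ⌉ ≤ k → F k ≤ F (k + 1) := fun k hk => by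
    obtain ⟨h1k, hσk⟩ := max_le_iff.mp hk
    rw [hF' k h1k, hF' (k + 1) (by omega), Int.cast_add, Int.cast_one]
    exact avgCost_le_succ hB1 hE (by exact_mod_cast h1k) (hσ ▸ Int.ceil_le.mp hσk)
  refine ⟨hdesc, hasc, fun k hk => ?_⟩
  refine isMinOn_iff.mp (Int.isMinOn_Ici_of_succ_le_of_le_succ (fun j h1j hj => ?_) hasc) k hk
  exact (hdesc j h1j ((lt_max_iff.mp hj).resolve_left (by omega))).le

/-- `F` first strictly decreases (below `⌈σ⌉`) and then increases (from `max 1 ⌈σ⌉` on)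
over the positive integers; in particular its minimum over the positive integers is
attained at `max 1 ⌈σ⌉`. -/
theorem F_unimodal (B E : ℝ) (hB0 : 0 ≤ B) (hB1 : B < 1) (hE : 0 < E)
    (F : ℤ → ℝ)
    (hF : ∀ k : ℤ, 1 ≤ k →
      F k = ((1 - B) / (B + k * (1 - B))) *
        ((k : ℝ) * (k - 1) / 2 + (E + k) / (1 - B) + B / (1 - B) ^ 2))
    (σ : ℝ)
    (hσ : σ = -(1 + B) / (2 * (1 - B)) +
      Real.sqrt (B ^ 2 / (1 - B) ^ 2 + (B + 2 * E) / (1 - B) + 1 / 4)) :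
    (∀ k : ℤ, 1 ≤ k → k < ⌈σ⌉ → F (k + 1) < F k) ∧
    (∀ k : ℤ, max 1 ⌈σ⌉ ≤ k → F k ≤ F (k + 1)) ∧
    (∀ k : ℤ, 1 ≤ k → F (max 1 ⌈σ⌉) ≤ F k) :=
  F_unimodal_general B E hB1 hE F hF σ hσ
end

section
/- (Threshold structure of the value-iteration optimizer, Lemma 2 for the iterates.) For every n ≥ 0 and all integers 1 ≤ Δ₁ ≤ Δ₂: if transmitting is optimal at age Δ₁, i.e. Q¹_{n+1}(Δ₁) ≤ Q⁰_{n+1}(Δ₁), then transmitting is also optimal at age Δ₂, i.e. Q¹_{n+1}(Δ₂) ≤ Q⁰_{n+1}(Δ₂). Consequently, for every n there exists a threshold such that, among admissible states (those with Λ ≥ D(Δ)), the minimum defining V_{n+1}(Δ,Λ) is attained by the transmit action exactly when Δ is at least that threshold. -/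
/-- Value-iteration functions for the discounted age-plus-energy MDP with
age-dependent distortion requirement. `VI M P p α β D n Δ Λ` is `V_n(Δ, Λ)`. -/
noncomputable def VI (M : ℕ) (P : ℕ → ℝ) (p α β : ℝ) (D : ℕ → ℕ) :
    ℕ → ℕ → ℕ → ℝ
  | 0 => fun _ _ => 0
  | n + 1 => fun Δ Λ =>
      let En : ℕ → ℝ := fun d => ∑ l ∈ Finset.range (M + 1), P l * VI M P p α β D n d l
      let Q0 : ℝ := (Δ : ℝ) + α * En (Δ + 1)
      let Q1 : ℝ := (Δ : ℝ) + β + α * (p * En (Δ + 1) + (1 - p) * En 1)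
      if D Δ ≤ Λ then min Q0 Q1 else Q0

/-- `EnVI M P p α β D n Δ = E_n(Δ) = Σ_{Λ'=0}^{M} P(Λ')·V_n(Δ, Λ')`. -/
noncomputable def EnVI (M : ℕ) (P : ℕ → ℝ) (p α β : ℝ) (D : ℕ → ℕ) (n Δ : ℕ) : ℝ :=
  ∑ l ∈ Finset.range (M + 1), P l * VI M P p α β D n Δ l

/-- `Qzero M P p α β D n Δ = Q⁰_{n+1}(Δ)`, the no-transmission cost-to-go. -/
noncomputable def Qzero (M : ℕ) (P : ℕ → ℝ) (p α β : ℝ) (D : ℕ → ℕ) (n Δ : ℕ) : ℝ :=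
  (Δ : ℝ) + α * EnVI M P p α β D n (Δ + 1)

/-- `Qone M P p α β D n Δ = Q¹_{n+1}(Δ)`, the transmission cost-to-go. -/
noncomputable def Qone (M : ℕ) (P : ℕ → ℝ) (p α β : ℝ) (D : ℕ → ℕ) (n Δ : ℕ) : ℝ :=
  (Δ : ℝ) + β + α * (p * EnVI M P p α β D n (Δ + 1) + (1 - p) * EnVI M P p α β D n 1)

/-!
By induction on `n`, `V_n(Δ, Λ)` is nondecreasing in the age `Δ` (monotonicity of `D` makes the
admissible set shrink as `Δ` grows), hence so are `E_n`, `Q⁰_{n+1}` and `Q¹_{n+1}`. The extra cost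
of transmitting is `Q¹_{n+1}(Δ) - Q⁰_{n+1}(Δ) = β - α (1 - p) (E_n(Δ + 1) - E_n(1))`, which is
therefore nonincreasing in `Δ`: the ages at which transmitting is optimal form an up-set of `ℕ`,
i.e. the ages above a threshold in `ℕ∞`.
-/

theorem exists_enat_threshold_of_monotone {q : ℕ → Prop} (hq : Monotone q) :
    ∃ T : ℕ∞, ∀ n : ℕ, q n ↔ T ≤ n := by
  classical
  by_cases h : ∃ n, q n
  · refine ⟨Nat.find h, fun n => ⟨fun hn => ?_, fun hT => ?_⟩⟩
    · exact_mod_cast Nat.find_min' h hn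
    · exact hq (by exact_mod_cast hT) (Nat.find_spec h)
  · exact ⟨⊤, fun n => iff_of_false (fun hn => h ⟨n, hn⟩) (by simp)⟩

section ValueIteration

variable {M : ℕ} {P : ℕ → ℝ} {p α β : ℝ} {D : ℕ → ℕ}

theorem VI_succ (n Δ Λ : ℕ) :
    VI M P p α β D (n + 1) Δ Λ =
      if D Δ ≤ Λ then min (Qzero M P p α β D n Δ) (Qone M P p α β D n Δ)
      else Qzero M P p α β D n Δ := by
  simp only [VI, EnVI, Qzero, Qone]

theorem Qone_sub_Qzero (n Δ : ℕ) :
    Qone M P p α β D n Δ - Qzero M P p α β D n Δ =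
      β - α * (1 - p) * (EnVI M P p α β D n (Δ + 1) - EnVI M P p α β D n 1) := by
  simp only [Qone, Qzero]
  ring

theorem monotone_EnVI (hP : ∀ l, 0 ≤ P l) {n : ℕ}
    (hV : ∀ Λ, Monotone fun Δ => VI M P p α β D n Δ Λ) :
    Monotone (EnVI M P p α β D n) := fun _ _ h =>
  Finset.sum_le_sum fun l _ => mul_le_mul_of_nonneg_left (hV l h) (hP l)

theorem monotone_Qzero (hα : 0 ≤ α) {n : ℕ} (hE : Monotone (EnVI M P p α β D n)) :
    Monotone (Qzero M P p α β D n) := by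
  intro Δ₁ Δ₂ h
  have hE' := hE (Nat.succ_le_succ h)
  simp only [Qzero]
  gcongr

theorem monotone_Qone (hα : 0 ≤ α) (hp : 0 ≤ p) {n : ℕ}
    (hE : Monotone (EnVI M P p α β D n)) :
    Monotone (Qone M P p α β D n) := by
  intro Δ₁ Δ₂ h
  have hE' := hE (Nat.succ_le_succ h)
  simp only [Qone]
  gcongr

theorem monotone_VI (hP : ∀ l, 0 ≤ P l) (hp : 0 ≤ p) (hα : 0 ≤ α) (hD : Monotone D) :
    ∀ n Λ, Monotone fun Δ => VI M P p α β D n Δ Λ := by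
  intro n
  induction n with
  | zero => intro Λ _ _ _; simp [VI]
  | succ n ih =>
    intro Λ Δ₁ Δ₂ h
    have hE := monotone_EnVI hP ih
    have hQ0 := monotone_Qzero hα hE h
    have hQ1 := monotone_Qone hα hp hE h
    simp only [VI_succ]
    by_cases h₂ : D Δ₂ ≤ Λ
    · rw [if_pos (le_trans (hD h) h₂), if_pos h₂]
      exact min_le_min hQ0 hQ1
    · rw [if_neg h₂]
      split_ifs
      exacts [(min_le_left _ _).trans hQ0, hQ0]

theorem antitone_Qone_sub_Qzero (hα : 0 ≤ α) (hp : p ≤ 1) {n : ℕ}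
    (hE : Monotone (EnVI M P p α β D n)) :
    Antitone fun Δ => Qone M P p α β D n Δ - Qzero M P p α β D n Δ := by
  intro Δ₁ Δ₂ h
  have hE' := hE (Nat.succ_le_succ h)
  have hp' : 0 ≤ 1 - p := sub_nonneg.mpr hp
  simp only [Qone_sub_Qzero]
  gcongr

end ValueIteration

theorem VI_threshold_structure_general (M : ℕ) (P : ℕ → ℝ) (p α β : ℝ) (D : ℕ → ℕ)
    (hP : ∀ l, 0 ≤ P l)
    (hp0 : 0 ≤ p) (hp1 : p ≤ 1) (hα0 : 0 < α)
    (hD : Monotone D) :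
    ∀ n : ℕ,
      (∀ Δ₁ Δ₂ : ℕ, 1 ≤ Δ₁ → Δ₁ ≤ Δ₂ →
        Qone M P p α β D n Δ₁ ≤ Qzero M P p α β D n Δ₁ →
        Qone M P p α β D n Δ₂ ≤ Qzero M P p α β D n Δ₂) ∧
      (∃ T : ℕ∞, ∀ Δ Λ : ℕ, 1 ≤ Δ → Λ ≤ M → D Δ ≤ Λ →
        ((VI M P p α β D (n + 1) Δ Λ = Qone M P p α β D n Δ ∧
          Qone M P p α β D n Δ ≤ Qzero M P p α β D n Δ) ↔ T ≤ (Δ : ℕ∞))) := by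
  intro n
  have hE : Monotone (EnVI M P p α β D n) :=
    monotone_EnVI hP (monotone_VI hP hp0 hα0.le hD n)
  have htransmit : Monotone fun Δ => Qone M P p α β D n Δ ≤ Qzero M P p α β D n Δ :=
    fun _ _ h h₁ => sub_nonpos.mp ((antitone_Qone_sub_Qzero hα0.le hp1 hE h).trans
      (sub_nonpos.mpr h₁))
  obtain ⟨T, hT⟩ := exists_enat_threshold_of_monotone htransmit
  refine ⟨fun _ _ _ h => htransmit h, T, fun Δ Λ _ _ hadm => ?_⟩
  rw [VI_succ, if_pos hadm, ← hT]
  exact ⟨And.right, fun h => ⟨min_eq_right h, h⟩⟩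

/-- Threshold structure of the value-iteration optimizer: if transmitting is optimal at
age `Δ₁` then it is optimal at any larger age `Δ₂`; consequently there is a threshold
(possibly infinite) such that, among admissible states, the minimum defining `V_{n+1}`
is attained by the transmit action exactly when the age is at least the threshold. -/
theorem VI_threshold_structure (M : ℕ) (P : ℕ → ℝ) (p α β : ℝ) (D : ℕ → ℕ)
    (hP : ∀ l, 0 ≤ P l) (hPsum : ∑ l ∈ Finset.range (M + 1), P l = 1)
    (hp0 : 0 ≤ p) (hp1 : p ≤ 1) (hα0 : 0 < α) (hα1 : α < 1) (hβ : 0 ≤ β)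
    (hD : Monotone D) :
    ∀ n : ℕ,
      (∀ Δ₁ Δ₂ : ℕ, 1 ≤ Δ₁ → Δ₁ ≤ Δ₂ →
        Qone M P p α β D n Δ₁ ≤ Qzero M P p α β D n Δ₁ →
        Qone M P p α β D n Δ₂ ≤ Qzero M P p α β D n Δ₂) ∧
      (∃ T : ℕ∞, ∀ Δ Λ : ℕ, 1 ≤ Δ → Λ ≤ M → D Δ ≤ Λ →
        ((VI M P p α β D (n + 1) Δ Λ = Qone M P p α β D n Δ ∧
          Qone M P p α β D n Δ ≤ Qzero M P p α β D n Δ) ↔ T ≤ (Δ : ℕ∞))) :=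
  VI_threshold_structure_general M P p α β D hP hp0 hp1 hα0 hD
end
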